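/- Let X be a nonempty clopen subset of Z_p^n. The restrictions to X of polynomial functions Z_p^n → Q_p are dense in the space C(X, Q_p) of continuous functions with the sup-norm. -/

import Mathlib

/-!
A continuous function on the clopen set `X` extends by zero to a continuous function on
`ℤ_[p]^n`, so it suffices to approximate continuous functions on the whole cube. This goes by
induction on `n`: viewing `F(x₀, y)` as a continuous function of `x₀` with values in
`C(ℤ_[p]^(n-1), ℚ_[p])`, a truncated Mahler expansion `∑ₖ (x₀ choose k) cₖ(y)` approximates it
uniformly, and the coefficients `cₖ` are approximated by polynomials. The error stays small because
`‖x₀ choose k‖ ≤ 1` and the norm is ultrametric.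
-/

open scoped fwdDiff

section Extension

variable {α β : Type*} [TopologicalSpace α] [TopologicalSpace β] [Zero β] {s : Set α}

theorem IsClopen.exists_continuousMap_restrict_eq (hs : IsClopen s) {f : s → β}
    (hf : Continuous f) :
    ∃ F : C(α, β), ∀ x : s, F x = f x := by
  classical
  let F : α → β := Function.extend Subtype.val f 0
  have hF : ∀ x : s, F x = f x := Subtype.val_injective.extend_apply f 0
  have hs_on : ContinuousOn F s := by
    rw [continuousOn_iff_continuous_domRestrict]
    convert hf using 1
    exact funext hF
  have hsc_on : ContinuousOn F sᶜ := continuousOn_const.congr fun x hx =>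
    Function.extend_apply' _ _ _ fun ⟨y, hy⟩ => hx (hy ▸ y.2)
  have hcont : Continuous F := by
    rw [← continuousOn_univ, ← Set.union_compl_self s]
    exact hs_on.union_of_isOpen hsc_on hs.isOpen hs.compl.isOpen
  exact ⟨⟨F, hcont⟩, hF⟩

end Extension

namespace PadicInt

open MvPolynomial

variable {p : ℕ} [Fact p.Prime]

instance : IsBoundedSMul ℤ_[p] ℚ_[p] :=
  IsBoundedSMul.of_norm_smul_le fun r x => by
    rw [Algebra.smul_def, norm_mul, algebraMap_apply, padic_norm_e_of_padicInt]

theorem exists_norm_sub_sum_mahler_smul_le {E : Type*} [NormedAddCommGroup E] [Module ℤ_[p] E]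
    [IsBoundedSMul ℤ_[p] E] [IsUltrametricDist E] [CompleteSpace E] (f : C(ℤ_[p], E))
    {ε : ℝ} (hε : 0 < ε) :
    ∃ K : ℕ, ∀ x, ‖f x - ∑ k ∈ Finset.range K, mahler k x • Δ_[1] ^[k] f 0‖ ≤ ε := by
  obtain ⟨K, hK⟩ := Metric.tendsto_atTop.mp (hasSum_mahler f).tendsto_sum_nat ε hε
  refine ⟨K, fun x => ?_⟩
  calc ‖f x - ∑ k ∈ Finset.range K, mahler k x • Δ_[1] ^[k] f 0‖
      = ‖(f - ∑ k ∈ Finset.range K, mahlerTerm (Δ_[1] ^[k] f 0) k : C(ℤ_[p], E)) x‖ := by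
        simp only [ContinuousMap.sub_apply, ContinuousMap.sum_apply, mahlerTerm_apply]
    _ ≤ ‖f - ∑ k ∈ Finset.range K, mahlerTerm (Δ_[1] ^[k] f 0) k‖ :=
        ContinuousMap.norm_coe_le_norm _ x
    _ ≤ ε := by rw [← dist_eq_norm, dist_comm]; exact (hK K le_rfl).le

-- `Ring.choose` on `MvPolynomial _ ℚ_[p]` comes from its `ℚ`-algebra structure.
theorem eval_choose_X {n : ℕ} (x : Fin n → ℤ_[p]) (i : Fin n) (k : ℕ) :
    eval (fun j => (x j : ℚ_[p])) (Ring.choose (X i) k) = mahler k (x i) := by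
  rw [Ring.map_choose, eval_X, mahler_apply]
  exact (Ring.map_choose (Coe.ringHom (p := p)) (x i) k).symm

theorem exists_mvPolynomial_norm_sub_eval_le (n : ℕ) (F : C(Fin n → ℤ_[p], ℚ_[p])) {ε : ℝ}
    (hε : 0 < ε) :
    ∃ g : MvPolynomial (Fin n) ℚ_[p], ∀ x, ‖F x - eval (fun i => (x i : ℚ_[p])) g‖ ≤ ε := by
  induction n with
  | zero => exact ⟨C (F 0), fun x => by simp [Subsingleton.elim x 0, hε.le]⟩
  | succ n ih =>
    let Φ : C(ℤ_[p], C(Fin n → ℤ_[p], ℚ_[p])) :=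
      (F.comp ⟨fun q : ℤ_[p] × (Fin n → ℤ_[p]) => Fin.cons q.1 q.2, by fun_prop⟩).curry
    obtain ⟨K, hK⟩ := exists_norm_sub_sum_mahler_smul_le Φ hε
    choose G hG using fun k => ih (Δ_[1] ^[k] Φ 0)
    refine ⟨∑ k ∈ Finset.range K, Ring.choose (X 0) k * rename Fin.succ (G k), fun x => ?_⟩
    set y := Fin.tail x
    have hFx : F x = Φ (x 0) y := by simp [Φ, y, Fin.cons_self_tail]
    have heval : eval (fun i => (x i : ℚ_[p]))
        (∑ k ∈ Finset.range K, Ring.choose (X 0) k * rename Fin.succ (G k)) =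
        ∑ k ∈ Finset.range K, (mahler k (x 0) : ℚ_[p]) * eval (fun i => (y i : ℚ_[p])) (G k) := by
      simp only [map_sum, map_mul, eval_choose_X, eval_rename]
      rfl
    have hsplit : F x - ∑ k ∈ Finset.range K,
          (mahler k (x 0) : ℚ_[p]) * eval (fun i => (y i : ℚ_[p])) (G k) =
        (Φ (x 0) - ∑ k ∈ Finset.range K, mahler k (x 0) • Δ_[1] ^[k] Φ 0) y +
          ∑ k ∈ Finset.range K, (mahler k (x 0) : ℚ_[p]) *
            (Δ_[1] ^[k] Φ 0 y - eval (fun i => (y i : ℚ_[p])) (G k)) := by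
      simp only [hFx, ContinuousMap.sub_apply, ContinuousMap.sum_apply, ContinuousMap.smul_apply]
      simp only [Algebra.smul_def, algebraMap_apply, mul_sub, Finset.sum_sub_distrib]
      ring
    rw [heval, hsplit]
    refine (IsUltrametricDist.norm_add_le_max _ _).trans (max_le ?_ ?_)
    · exact (ContinuousMap.norm_coe_le_norm _ y).trans (hK (x 0))
    · refine IsUltrametricDist.norm_sum_le_of_forall_le_of_nonneg hε.le fun k _ => ?_
      rw [norm_mul, ← one_mul ε]
      exact mul_le_mul (by simpa using norm_le_one _) (hG k y) (norm_nonneg _) zero_le_one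

end PadicInt

theorem stmt_6_general (p : ℕ) [Fact p.Prime] (n : ℕ)
    (X : Set (Fin n → ℤ_[p])) (hX : IsClopen X)
    (f : X → ℚ_[p]) (hf : Continuous f) :
    ∀ ε : ℝ, 0 < ε → ∃ g : MvPolynomial (Fin n) ℚ_[p],
      ∀ x : X, ‖f x - MvPolynomial.eval (fun i => ((x.1 i : ℚ_[p]))) g‖ ≤ ε := by
  intro ε hε
  obtain ⟨F, hF⟩ := hX.exists_continuousMap_restrict_eq hf
  obtain ⟨g, hg⟩ := PadicInt.exists_mvPolynomial_norm_sub_eval_le n F hε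
  exact ⟨g, fun x => hF x ▸ hg x⟩

theorem stmt_6 (p : ℕ) [Fact p.Prime] (n : ℕ)
    (X : Set (Fin n → ℤ_[p])) (hX : IsClopen X) (hne : X.Nonempty)
    (f : X → ℚ_[p]) (hf : Continuous f) :
    ∀ ε : ℝ, 0 < ε → ∃ g : MvPolynomial (Fin n) ℚ_[p],
      ∀ x : X, ‖f x - MvPolynomial.eval (fun i => ((x.1 i : ℚ_[p]))) g‖ ≤ ε :=
  stmt_6_general p n X hX f hf
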